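/- arXiv:2112.01884 — 3 statements merged into one kernel-verified Lean document; each statement's English description precedes it below -/
import Mathlib

section
/- Let A, B be vertices of SG(n,k) with A ∩ B ≠ ∅ and X = A ∪ B. If the number of connected components of the subgraph of C_n induced by {1,...,n} \ X is at least k, then dist(A,B) = 2. -/
/-!
Choose one vertex in each of `k` distinct components of `C_n - (A ∪ B)`. Two cyclically
consecutive vertices outside `A ∪ B` are adjacent in that induced subgraph, hence lie in the same
component, so the chosen vertices form a 2-stable `k`-set `C` disjoint from `A ∪ B`. Thus `C` is a
common neighbour of `A` and `B` in `SG(n,k)`, while `A` and `B` meet and so are not adjacent.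
-/

/-- The cycle graph `C_n` on vertex set `ZMod n` (representing `{1,…,n}` cyclically). -/
def CycleGraph (n : ℕ) : SimpleGraph (ZMod n) where
  Adj i j := i ≠ j ∧ (i + 1 = j ∨ j + 1 = i)
  symm := ⟨fun i j ⟨h, h2⟩ => ⟨h.symm, h2.symm⟩⟩
  loopless := ⟨fun i ⟨h, _⟩ => h rfl⟩

/-- A subset of `ZMod n` is 2-stable if it contains no two cyclically consecutive elements. -/
def Stable2 (n : ℕ) (S : Finset (ZMod n)) : Prop := ∀ i ∈ S, i + 1 ∉ S

/-- Vertices of the Schrijver graph: 2-stable `k`-subsets of `{1,…,n}`. -/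
def SGVert (n k : ℕ) : Type := {S : Finset (ZMod n) // S.card = k ∧ Stable2 n S}

/-- The Schrijver graph `SG(n,k)`: 2-stable `k`-subsets, adjacent iff disjoint. -/
def SG (n k : ℕ) : SimpleGraph (SGVert n k) where
  Adj A B := A ≠ B ∧ Disjoint A.1 B.1
  symm := ⟨fun A B ⟨h, h2⟩ => ⟨h.symm, h2.symm⟩⟩
  loopless := ⟨fun A ⟨h, _⟩ => h rfl⟩

open Finset

theorem exists_finset_card_eq_of_le_natCard {α : Type*} {k : ℕ} (hk : k ≤ Nat.card α) :
    ∃ s : Finset α, #s = k := by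
  cases finite_or_infinite α
  · have := Fintype.ofFinite α
    rw [Nat.card_eq_fintype_card, ← card_univ] at hk
    obtain ⟨s, -, hs⟩ := exists_subset_card_eq hk
    exact ⟨s, hs⟩
  · exact Infinite.exists_subset_card_eq α k

namespace SimpleGraph

variable {V : Type*} {G : SimpleGraph V} {u v : V}

theorem exists_finset_reachable_eq_of_le_card_connectedComponent {k : ℕ}
    (hk : k ≤ Nat.card G.ConnectedComponent) :
    ∃ T : Finset V, #T = k ∧ ∀ u ∈ T, ∀ v ∈ T, G.Reachable u v → u = v := by
  obtain ⟨s, hs⟩ := exists_finset_card_eq_of_le_natCard hk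
  have hout : Function.LeftInverse G.connectedComponentMk (·.out) := Quot.out_eq
  refine ⟨s.map ⟨(·.out), hout.injective⟩, by rw [card_map, hs], ?_⟩
  simp only [mem_map, Function.Embedding.coeFn_mk]
  rintro _ ⟨c, -, rfl⟩ _ ⟨d, -, rfl⟩ hcd
  rw [← ConnectedComponent.eq, hout, hout] at hcd
  exact congrArg _ hcd

theorem dist_eq_two_iff :
    G.dist u v = 2 ↔ u ≠ v ∧ ¬G.Adj u v ∧ (G.commonNeighbors u v).Nonempty :=
  (ENat.toNat_eq_iff two_ne_zero).trans edist_eq_two_iff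

end SimpleGraph

theorem Finset.disjoint_map_subtype_compl {α : Type*} {s t : Finset α} (hst : s ⊆ t)
    (T : Finset ↥(↑t : Set α)ᶜ) : Disjoint s (T.map (Function.Embedding.subtype _)) := by
  rw [disjoint_right]
  rintro _ hx hxs
  obtain ⟨u, -, rfl⟩ := mem_map.mp hx
  exact u.2 (hst hxs)

section

variable {n k : ℕ}

theorem Stable2.one_ne_zero {S : Finset (ZMod n)} (hS : Stable2 n S) (hne : S.Nonempty) :
    (1 : ZMod n) ≠ 0 := by
  obtain ⟨i, hi⟩ := hne
  intro h
  exact hS i hi (by rwa [h, add_zero])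

theorem stable2_map_subtype_of_reachable_eq (hone : (1 : ZMod n) ≠ 0) {Y : Set (ZMod n)}
    {T : Finset Y} (hT : ∀ u ∈ T, ∀ v ∈ T, ((CycleGraph n).induce Y).Reachable u v → u = v) :
    Stable2 n (T.map (Function.Embedding.subtype _)) := by
  simp only [Stable2, mem_map, Function.Embedding.coe_subtype]
  rintro _ ⟨u, hu, rfl⟩ ⟨v, hv, huv⟩
  have hne : (u : ZMod n) ≠ u + 1 := by simpa using hone
  have hadj : ((CycleGraph n).induce Y).Adj u v := by
    rw [SimpleGraph.induce_adj, huv]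
    exact ⟨hne, .inl rfl⟩
  exact hne ((congrArg Subtype.val (hT u hu v hv hadj.reachable)).trans huv)

namespace SG

theorem adj_of_disjoint {A C : SGVert n k} (hA : A.1.Nonempty) (h : Disjoint A.1 C.1) :
    (SG n k).Adj A C := by
  refine ⟨fun hAC => ?_, h⟩
  rw [← hAC, disjoint_self_iff_empty] at h
  exact hA.ne_empty h

theorem not_adj_of_inter_nonempty {A B : SGVert n k} (h : (A.1 ∩ B.1).Nonempty) :
    ¬(SG n k).Adj A B := fun hAB =>
  not_disjoint_iff_nonempty_inter.mpr h hAB.2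

end SG

end

theorem stmt4 (n k : ℕ) (A B : SGVert n k) (hne : A ≠ B) (h : (A.1 ∩ B.1).Nonempty)
    (hcomp : k ≤ Nat.card
      ((CycleGraph n).induce ((↑(A.1 ∪ B.1) : Set (ZMod n))ᶜ)).ConnectedComponent) :
    (SG n k).dist A B = 2 := by
  have hA : A.1.Nonempty := h.mono inter_subset_left
  have hB : B.1.Nonempty := h.mono inter_subset_right
  obtain ⟨T, hTcard, hT⟩ :=
    SimpleGraph.exists_finset_reachable_eq_of_le_card_connectedComponent hcomp
  let C : SGVert n k := ⟨T.map (.subtype _), by rw [card_map, hTcard],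
    stable2_map_subtype_of_reachable_eq (A.2.2.one_ne_zero hA) hT⟩
  refine SimpleGraph.dist_eq_two_iff.mpr ⟨hne, SG.not_adj_of_inter_nonempty h, C, ?_, ?_⟩
  · exact SG.adj_of_disjoint hA (disjoint_map_subtype_compl subset_union_left T)
  · exact SG.adj_of_disjoint hB (disjoint_map_subtype_compl subset_union_right T)
end

section
/- Let k ≥ 3 and 2k+2 ≤ n ≤ 4k−3. Then in SG(n,k) the vertices A = {1,4,6,8,...,2k} and B = {1,5,7,9,...,2k+1} are at distance exactly 3. -/
/-! The path `A – {3,5,…,2k+1} – {2,4,…,2k} – B` gives distance at most 3. `A` and `B` share `1`,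
so they are not adjacent, and a common neighbour `W` avoids `1` and `{4,…,2k+1}`: it lies in
`{2,3} ∪ {2k+2,…,n}` and contains at most one of `2, 3`. As `W` is 2-stable, `W` and `W + 1` are
disjoint, so `2k = |W ∪ (W + 1)| ≤ n - 2k + 2 ≤ 2k - 1`, a contradiction. -/

open Finset

lemma mem_image_range_add_two_mul {c m a : ℕ} :
    a ∈ (range m).image (fun i => c + 2 * i) ↔ c ≤ a ∧ a < c + 2 * m ∧ a % 2 = c % 2 := by
  simp only [mem_image, mem_range]
  constructor
  · rintro ⟨i, hi, rfl⟩
    omega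
  · intro h
    exact ⟨(a - c) / 2, by omega, by omega⟩

section NatCast

variable {n : ℕ} {s t : Finset ℕ}

lemma mem_image_natCast_iff [NeZero n] (hs : ∀ a ∈ s, a < n) {x : ZMod n} :
    x ∈ s.image (Nat.cast : ℕ → ZMod n) ↔ x.val ∈ s := by
  refine ⟨?_, fun hx => mem_image.2 ⟨x.val, hx, ZMod.natCast_zmod_val x⟩⟩
  intro hx
  obtain ⟨a, ha, rfl⟩ := mem_image.1 hx
  rwa [ZMod.val_natCast_of_lt (hs a ha)]

lemma card_image_natCast (hs : ∀ a ∈ s, a < n) :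
    (s.image (Nat.cast : ℕ → ZMod n)).card = s.card :=
  card_image_of_injOn fun a ha b hb hab => by
    simpa [ZMod.val_natCast_of_lt (hs a ha), ZMod.val_natCast_of_lt (hs b hb)] using
      congrArg ZMod.val hab

lemma disjoint_image_natCast [NeZero n] (hs : ∀ a ∈ s, a < n) (ht : ∀ a ∈ t, a < n)
    (h : Disjoint s t) :
    Disjoint (s.image (Nat.cast : ℕ → ZMod n)) (t.image Nat.cast) :=
  disjoint_left.2 fun _ hxs hxt =>
    disjoint_left.1 h ((mem_image_natCast_iff hs).1 hxs) ((mem_image_natCast_iff ht).1 hxt)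

lemma stable2_image_natCast (hs : ∀ a ∈ s, 0 < a ∧ a < n) (h : ∀ a ∈ s, a + 1 ∉ s) :
    Stable2 n (s.image Nat.cast) := by
  rintro _ hx hx1
  obtain ⟨a, ha, rfl⟩ := mem_image.1 hx
  obtain ⟨b, hb, hab⟩ := mem_image.1 hx1
  have hbn := hs b hb
  have hmod : (a + 1) % n = b := by
    rw [← Nat.mod_eq_of_lt hbn.2, ← ZMod.natCast_eq_natCast_iff']
    push_cast
    exact hab.symm
  rcases Nat.lt_or_ge (a + 1) n with hlt | hge
  · rw [Nat.mod_eq_of_lt hlt] at hmod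
    exact h a ha (hmod ▸ hb)
  · rw [show a + 1 = n by have := hs a ha; omega, Nat.mod_self] at hmod
    omega

end NatCast

namespace Stable2

variable {n : ℕ} {S : Finset (ZMod n)}

lemma disjoint_image_add_one (hS : Stable2 n S) : Disjoint S (S.image (· + 1)) :=
  disjoint_right.2 fun _ hy hyS => by
    obtain ⟨x, hx, rfl⟩ := mem_image.1 hy
    exact hS x hx hyS

lemma val_ne_val_add_one [NeZero n] (hS : Stable2 n S) {c c' : ZMod n} (hc : c ∈ S)
    (hc' : c' ∈ S) : c'.val ≠ c.val + 1 := by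
  intro h
  apply hS c hc
  rwa [← ZMod.natCast_zmod_val c', h, Nat.cast_add, Nat.cast_one, ZMod.natCast_zmod_val] at hc'

lemma two_mul_card_le (hS : Stable2 n S) {V : Finset ℕ} (hSV : S ⊆ V.image Nat.cast) :
    2 * S.card ≤ (V ∪ V.image (· + 1)).card := by
  have hsub : S ∪ S.image (· + 1) ⊆ (V ∪ V.image (· + 1)).image (Nat.cast : ℕ → ZMod n) := by
    rw [image_union, image_image]
    refine union_subset_union hSV ((image_subset_image hSV).trans ?_)
    rw [image_image]
    intro y hy
    obtain ⟨a, ha, rfl⟩ := mem_image.1 hy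
    exact mem_image.2 ⟨a, ha, by simp⟩
  calc 2 * S.card = (S ∪ S.image (· + 1)).card := by
        rw [card_union_of_disjoint hS.disjoint_image_add_one,
          card_image_of_injective _ (add_left_injective 1), two_mul]
    _ ≤ _ := card_le_card hsub
    _ ≤ _ := card_image_le

lemma two_mul_card_le_of_disjoint [NeZero n] (hS : Stable2 n S) {m : ℕ} (hm : m < n)
    (hdisj : Disjoint S ((insert 1 (Icc 4 m)).image Nat.cast)) :
    2 * S.card ≤ n - m + 3 := by
  have hval : ∀ c ∈ S, c.val ∉ insert 1 (Icc 4 m) := fun c hc hmem =>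
    disjoint_left.1 hdisj hc (mem_image.2 ⟨c.val, hmem, ZMod.natCast_zmod_val c⟩)
  -- `S` contains at most one of the consecutive residues `2` and `3`
  obtain ⟨x, hx, hSx⟩ : ∃ x, (x = 2 ∨ x = 3) ∧ ∀ c ∈ S, c.val ≠ 5 - x := by
    by_cases h2 : ∃ c ∈ S, c.val = 2
    · obtain ⟨c, hc, hc2⟩ := h2
      exact ⟨2, .inl rfl, fun c' hc' => by
        have := hS.val_ne_val_add_one hc hc'
        omega⟩
    · push Not at h2
      exact ⟨3, .inr rfl, h2⟩
  have hSV : S ⊆ (insert x (Icc (m + 1) n)).image Nat.cast := by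
    intro c hc
    have hc1 := hval c hc
    have hcx := hSx c hc
    have hcn := ZMod.val_lt c
    simp only [mem_insert, mem_Icc, not_or, not_and, not_le] at hc1
    -- represent the residue `0` by `n`, so that the covering set stays an interval plus `x`
    refine mem_image.2 ⟨if c.val = 0 then n else c.val, ?_, ?_⟩
    · split_ifs <;> simp only [mem_insert, mem_Icc] <;> omega
    · split_ifs with h0
      · rw [ZMod.natCast_self, eq_comm, ← ZMod.val_eq_zero, h0]
      · exact ZMod.natCast_zmod_val c
  have hshift : insert x (Icc (m + 1) n) ∪ (insert x (Icc (m + 1) n)).image (· + 1) ⊆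
      insert x (insert (x + 1) (Icc (m + 1) (n + 1))) := by
    intro a ha
    rw [mem_union, mem_image] at ha
    rcases ha with ha | ⟨b, hb, rfl⟩ <;> simp only [mem_insert, mem_Icc] at * <;> omega
  calc 2 * S.card ≤ _ := hS.two_mul_card_le hSV
    _ ≤ _ := card_le_card hshift
    _ ≤ (Icc (m + 1) (n + 1)).card + 1 + 1 :=
        (card_insert_le _ _).trans (Nat.succ_le_succ (card_insert_le _ _))
    _ = n - m + 3 := by rw [Nat.card_Icc]; omega

end Stable2

lemma SimpleGraph.dist_eq_three {V : Type*} {G : SimpleGraph V} {u v : V} (p : G.Walk u v)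
    (hp : p.length = 3) (hadj : ¬G.Adj u v) (hcommon : G.commonNeighbors u v = ∅) :
    G.dist u v = 3 := by
  have hne : u ≠ v := by
    rintro rfl
    cases p with
    | nil => simp at hp
    | cons h _ => exact (Set.eq_empty_iff_forall_notMem.1 hcommon) _ ⟨h, h⟩
  have hlt : (2 : ℕ∞) < G.dist u v := by
    rw [p.reachable.coe_dist_eq_edist]
    exact G.two_lt_edist_iff.2 ⟨hne, hadj, hcommon⟩
  have := hp ▸ G.dist_le p
  norm_cast at hlt
  omega

lemma SG.adj_iff {n k : ℕ} (hk : k ≠ 0) {X Y : SGVert n k} :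
    (SG n k).Adj X Y ↔ Disjoint X.1 Y.1 := by
  refine ⟨And.right, fun hXY => ⟨fun h => hk ?_, hXY⟩⟩
  subst h
  rw [← X.2.1, (disjoint_self_iff_empty _).1 hXY, card_empty]

lemma SG.adj_image_natCast {n k : ℕ} [NeZero n] (hk : k ≠ 0) {s t : Finset ℕ}
    (hs : (s.image Nat.cast).card = k ∧ Stable2 n (s.image Nat.cast))
    (ht : (t.image Nat.cast).card = k ∧ Stable2 n (t.image Nat.cast))
    (hst : ∀ a ∈ s ∪ t, a < n) (hdisj : Disjoint s t) :
    (SG n k).Adj ⟨_, hs⟩ ⟨_, ht⟩ :=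
  (SG.adj_iff hk).2 <| disjoint_image_natCast (fun a ha => hst a (mem_union_left _ ha))
    (fun a ha => hst a (mem_union_right _ ha)) hdisj

lemma SG.commonNeighbors_eq_empty {n k m : ℕ} [NeZero n] (hm : m < n) (hk : n - m + 3 < 2 * k)
    {X Y : SGVert n k} (hXY : (insert 1 (Icc 4 m)).image Nat.cast ⊆ X.1 ∪ Y.1) :
    (SG n k).commonNeighbors X Y = ∅ := by
  refine Set.eq_empty_iff_forall_notMem.2 fun W ⟨hXW, hYW⟩ => ?_
  have hdisj : Disjoint W.1 ((insert 1 (Icc 4 m)).image Nat.cast) :=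
    (disjoint_union_right.2 ⟨hXW.2.symm, hYW.2.symm⟩).mono_right hXY
  have := W.2.2.two_mul_card_le_of_disjoint hm hdisj
  rw [W.2.1] at this
  omega

lemma card_and_stable2_image_range_add_two_mul {n c m : ℕ} (hc : 0 < c)
    (hcm : c + 2 * m ≤ n + 1) :
    (((range m).image fun i => c + 2 * i).image (Nat.cast : ℕ → ZMod n)).card = m ∧
      Stable2 n (((range m).image fun i => c + 2 * i).image Nat.cast) := by
  have hbound : ∀ a ∈ (range m).image (fun i => c + 2 * i), 0 < a ∧ a < n := by
    intro a ha
    rw [mem_image_range_add_two_mul] at ha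
    omega
  refine ⟨?_, stable2_image_natCast hbound fun a ha ha1 => ?_⟩
  · rw [card_image_natCast fun a ha => (hbound a ha).2,
      card_image_of_injective _ fun i j hij => by omega, card_range]
  · rw [mem_image_range_add_two_mul] at ha ha1
    omega

theorem stmt9 (n k : ℕ) (hk : 3 ≤ k) (h1 : 2 * k + 2 ≤ n) (h2 : n ≤ 4 * k - 3)
    (hA : ((insert 1 ((Finset.range (k - 1)).image fun i => 4 + 2 * i)).image
        (fun x : ℕ => (x : ZMod n))).card = k ∧
      Stable2 n ((insert 1 ((Finset.range (k - 1)).image fun i => 4 + 2 * i)).image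
        (fun x : ℕ => (x : ZMod n))))
    (hB : ((insert 1 ((Finset.range (k - 1)).image fun i => 5 + 2 * i)).image
        (fun x : ℕ => (x : ZMod n))).card = k ∧
      Stable2 n ((insert 1 ((Finset.range (k - 1)).image fun i => 5 + 2 * i)).image
        (fun x : ℕ => (x : ZMod n)))) :
    (SG n k).dist ⟨_, hA⟩ ⟨_, hB⟩ = 3 := by
  have : NeZero n := ⟨by omega⟩
  have hk0 : k ≠ 0 := by omega
  have hC := card_and_stable2_image_range_add_two_mul (n := n) (c := 3) (m := k)
    (by norm_num) (by omega)
  have hD := card_and_stable2_image_range_add_two_mul (n := n) (c := 2) (m := k)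
    (by norm_num) (by omega)
  have hAC := SG.adj_image_natCast hk0 hA hC ?_ ?_
  have hCD := SG.adj_image_natCast hk0 hC hD ?_ ?_
  have hDB := SG.adj_image_natCast hk0 hD hB ?_ ?_
  refine SimpleGraph.dist_eq_three (.cons hAC (.cons hCD (.cons hDB .nil))) rfl ?_
    (SG.commonNeighbors_eq_empty (m := 2 * k + 1) (by omega) (by omega)
      ((image_subset_image ?_).trans_eq (image_union _ _)))
  · exact fun h => disjoint_left.1 h.2 (mem_image_of_mem _ (mem_insert_self _ _))
      (mem_image_of_mem _ (mem_insert_self _ _))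
  all_goals
    simp only [subset_iff, disjoint_left, mem_union, mem_insert, mem_Icc,
      mem_image_range_add_two_mul]
    intros
    omega
end

section
/- Let A, B be vertices of SG(n,k) with |A ∩ B| = h, where 2k+2 ≤ n ≤ 4k−3. Then dist(A,B) ≤ 1 + 2h. -/
/-!
If `x ∈ A ∩ B`, replacing `x` in `A` by a suitable `y ∉ A ∪ B` gives a vertex `A'` with one
common element fewer with `B`, and `A'` is reachable from `A` in two steps through the rotation
`A + 1` or `A - 1`, which is disjoint from `A` by stability. If some common `x` has `x - 2 ∉ A`
(resp. `x + 2 ∉ A`), take `y = x - 1` (resp. `y = x + 1`). Otherwise any `y` at distance at least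
two from `A` and outside `B` works. If there were no such `y`, sending each `b ∈ B` to the first
element of `A` at or after `b` would be a bijection `B → A`, which forces `A ∩ B` to be closed
under `+ 2`, hence to have at least `n / 2 > k` elements. Induction on `|A ∩ B|` then gives a walk
of length at most `1 + 2 |A ∩ B|`.
-/

open Finset

section Development

variable {n k : ℕ}

namespace Stable2

variable {S : Finset (ZMod n)} {x : ZMod n}

theorem sub_one_notMem (hS : Stable2 n S) (hx : x ∈ S) : x - 1 ∉ S := fun h =>
  hS _ h (by rwa [sub_add_cancel])

theorem one_ne_zero_s12 (hS : Stable2 n S) (hx : x ∈ S) : (1 : ZMod n) ≠ 0 := fun h =>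
  hS x hx (by rwa [h, add_zero])

theorem image_add (hS : Stable2 n S) (c : ZMod n) : Stable2 n (S.image (· + c)) := by
  intro i hi hi₁
  obtain ⟨a, ha, rfl⟩ := mem_image.1 hi
  obtain ⟨b, hb, hba⟩ := mem_image.1 hi₁
  have : b = a + 1 := add_right_cancel (hba.trans (add_right_comm a c 1))
  exact hS a ha (this ▸ hb)

theorem disjoint_image_add (hS : Stable2 n S) {c : ZMod n} (hc : c = 1 ∨ c = -1) :
    Disjoint S (S.image (· + c)) := by
  rw [disjoint_left]
  intro x hx hx'
  obtain ⟨a, ha, rfl⟩ := mem_image.1 hx'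
  rcases hc with rfl | rfl
  · exact hS a ha hx
  · exact hS _ hx (by rwa [neg_add_cancel_right])

end Stable2

theorem card_inter_insert_erase_lt {α : Type*} [DecidableEq α] {s t : Finset α} {x y : α}
    (hx : x ∈ s ∩ t) (hy : y ∉ t) : (insert y (s.erase x) ∩ t).card < (s ∩ t).card := by
  rw [insert_inter_of_notMem hy, erase_inter]
  exact card_erase_lt_of_mem hx

theorem le_two_mul_card_of_add_two_mem {S : Finset (ZMod n)} {x : ZMod n} (hx : x ∈ S)
    (hS : ∀ y ∈ S, y + 2 ∈ S) : n ≤ 2 * S.card := by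
  by_contra! hlt
  have hmem : ∀ j : ℕ, x + ((2 * j : ℕ) : ZMod n) ∈ S := by
    intro j
    induction j with
    | zero => simpa using hx
    | succ j ih => simpa [mul_add, ← add_assoc] using hS _ ih
  have hinj : Set.InjOn (fun j : ℕ => x + ((2 * j : ℕ) : ZMod n)) (range (S.card + 1)) := by
    intro i hi j hj hij
    simp only [coe_range, Set.mem_Iio] at hi hj
    have h := (ZMod.natCast_eq_natCast_iff' _ _ _).1 (add_left_cancel hij)
    rw [Nat.mod_eq_of_lt (by omega), Nat.mod_eq_of_lt (by omega)] at h
    omega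
  have hsub : (range (S.card + 1)).image (fun j : ℕ => x + ((2 * j : ℕ) : ZMod n)) ⊆ S := by
    intro z hz
    obtain ⟨j, -, rfl⟩ := mem_image.1 hz
    exact hmem j
  have := card_le_card hsub
  rw [card_image_of_injOn hinj, card_range] at this
  omega

def firstOffset (A : Finset (ZMod n)) (b : ZMod n) : ℕ :=
  if b ∈ A then 0 else if b + 1 ∈ A then 1 else 2

section FirstOffset

variable {A B : Finset (ZMod n)} {b : ZMod n}

theorem firstOffset_le_two : firstOffset A b ≤ 2 := by
  unfold firstOffset
  split_ifs <;> omega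

theorem firstOffset_eq_zero_iff : firstOffset A b = 0 ↔ b ∈ A := by
  unfold firstOffset
  split_ifs <;> simp_all

theorem add_firstOffset_mem (hBs : Stable2 n B)
    (hfree : ∀ y, y - 1 ∉ A → y ∉ A → y + 1 ∉ A → y ∈ B) (hb : b ∈ B) :
    b + firstOffset A b ∈ A := by
  unfold firstOffset
  split_ifs with h₀ h₁
  · simpa using h₀
  · simpa using h₁
  · by_contra h₂
    refine hBs b hb (hfree _ (by simpa using h₀) h₁ ?_)
    simpa [add_assoc, one_add_one_eq_two] using h₂

theorem eq_of_add_firstOffset_eq (hBs : Stable2 n B)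
    (hrun : ∀ x ∈ A ∩ B, x - 2 ∈ A ∧ x + 2 ∈ A) {b' : ZMod n} (hb : b ∈ B) (hb' : b' ∈ B)
    (hle : firstOffset A b' ≤ firstOffset A b)
    (h : b + firstOffset A b = b' + firstOffset A b') : b = b' := by
  have hb'_eq : b' = b + ((firstOffset A b - firstOffset A b' : ℕ) : ZMod n) := by
    rw [Nat.cast_sub hle]
    linear_combination -h
  have := firstOffset_le_two (A := A) (b := b)
  obtain h' | h' | ⟨h₀, h₂⟩ : firstOffset A b' = firstOffset A b ∨
      firstOffset A b = firstOffset A b' + 1 ∨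
      (firstOffset A b' = 0 ∧ firstOffset A b = 2) := by
    omega
  · rw [h', Nat.sub_self, Nat.cast_zero, add_zero] at hb'_eq
    exact hb'_eq.symm
  · rw [h', Nat.add_sub_cancel_left, Nat.cast_one] at hb'_eq
    exact absurd (hb'_eq ▸ hb') (hBs b hb)
  · rw [h₀, h₂, Nat.sub_zero, Nat.cast_ofNat] at hb'_eq
    have hbA : b ∈ A := by
      have := (hrun b' (mem_inter.2 ⟨firstOffset_eq_zero_iff.1 h₀, hb'⟩)).1
      rwa [hb'_eq, add_sub_cancel_right] at this
    exact absurd (firstOffset_eq_zero_iff.2 hbA) (by omega)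

theorem image_add_firstOffset (hcard : A.card ≤ B.card) (hBs : Stable2 n B)
    (hfree : ∀ y, y - 1 ∉ A → y ∉ A → y + 1 ∉ A → y ∈ B)
    (hrun : ∀ x ∈ A ∩ B, x - 2 ∈ A ∧ x + 2 ∈ A) :
    B.image (fun b => b + firstOffset A b) = A := by
  have hinj : Set.InjOn (fun b => b + firstOffset A b) B := by
    intro b hb b' hb' h
    rcases le_total (firstOffset A b') (firstOffset A b) with hle | hle
    · exact eq_of_add_firstOffset_eq hBs hrun hb hb' hle h
    · exact (eq_of_add_firstOffset_eq hBs hrun hb' hb hle h.symm).symm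
  refine eq_of_subset_of_card_le ?_ ?_
  · intro a ha
    obtain ⟨b, hb, rfl⟩ := mem_image.1 ha
    exact add_firstOffset_mem hBs hfree hb
  · rwa [card_image_of_injOn hinj]

theorem add_two_mem_inter (hcard : A.card ≤ B.card) (hBs : Stable2 n B)
    (hfree : ∀ y, y - 1 ∉ A → y ∉ A → y + 1 ∉ A → y ∈ B)
    (hrun : ∀ x ∈ A ∩ B, x - 2 ∈ A ∧ x + 2 ∈ A) {x : ZMod n} (hx : x ∈ A ∩ B) :
    x + 2 ∈ A ∩ B := by
  obtain ⟨hxA, hxB⟩ := mem_inter.1 hx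
  have hx_add := (hrun x hx).2
  refine mem_inter.2 ⟨hx_add, ?_⟩
  rw [← image_add_firstOffset hcard hBs hfree hrun] at hx_add
  obtain ⟨b, hb, hbx⟩ := mem_image.1 hx_add
  have := firstOffset_le_two (A := A) (b := b)
  obtain h₀ | h₁ | h₂ :
      firstOffset A b = 0 ∨ firstOffset A b = 1 ∨ firstOffset A b = 2 := by
    omega
  · simpa [h₀, ← hbx] using hb
  · have : b = x + 1 := by
      rw [h₁, Nat.cast_one] at hbx
      linear_combination hbx
    exact absurd (this ▸ hb) (hBs x hxB)
  · have : b = x := by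
      rw [h₂, Nat.cast_ofNat] at hbx
      exact add_right_cancel hbx
    exact absurd (firstOffset_eq_zero_iff.2 (this ▸ hxA)) (by omega)

theorem exists_free_notMem (hcard : A.card ≤ B.card) (hn : 2 * A.card < n)
    (hBs : Stable2 n B) (hAB : (A ∩ B).Nonempty)
    (hrun : ∀ x ∈ A ∩ B, x - 2 ∈ A ∧ x + 2 ∈ A) :
    ∃ y, y - 1 ∉ A ∧ y ∉ A ∧ y + 1 ∉ A ∧ y ∉ B := by
  by_contra! hfree
  obtain ⟨x, hx⟩ := hAB
  have hle := le_two_mul_card_of_add_two_mem hx fun y hy =>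
    add_two_mem_inter hcard hBs hfree hrun hy
  have hsub := card_le_card (inter_subset_left : A ∩ B ⊆ A)
  omega

end FirstOffset

theorem SG.adj_of_disjoint_s12 {A C : SGVert n k} (hA : A.1.Nonempty) (h : Disjoint A.1 C.1) :
    (SG n k).Adj A C :=
  ⟨fun hAC => hA.ne_empty (disjoint_self.1 (hAC ▸ h)), h⟩

namespace SGVert

def shift (A : SGVert n k) (c : ZMod n) : SGVert n k :=
  ⟨A.1.image (· + c), by rw [card_image_of_injective _ (add_left_injective c), A.2.1],
    A.2.2.image_add c⟩

theorem exists_val_eq_insert_erase (A : SGVert n k) {x y : ZMod n} (hx : x ∈ A.1) (hy : y ∉ A.1)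
    (hy_add : y + 1 ∉ A.1.erase x) (hy_sub : y - 1 ∉ A.1.erase x) :
    ∃ A' : SGVert n k, A'.1 = insert y (A.1.erase x) := by
  obtain ⟨hcard, hst⟩ := A.2
  refine ⟨⟨insert y (A.1.erase x), ?_, ?_⟩, rfl⟩
  · have := card_pos.2 ⟨x, hx⟩
    rw [card_insert_of_notMem fun h => hy (mem_of_mem_erase h), card_erase_of_mem hx]
    omega
  · intro i hi hi₁
    rw [mem_insert] at hi hi₁
    rcases hi with rfl | hi
    · rcases hi₁ with h | h
      · exact hst.one_ne_zero_s12 hx (by linear_combination h)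
      · exact hy_add h
    · rcases hi₁ with h | h
      · exact hy_sub (by rwa [← h, add_sub_cancel_right])
      · exact hst i (mem_of_mem_erase hi) (mem_of_mem_erase h)

theorem exists_adj_adj_of_swap (A B : SGVert n k) {x y c : ZMod n} (hx : x ∈ A.1 ∩ B.1)
    (hyA : y ∉ A.1) (hyB : y ∉ B.1) (hc : c = 1 ∨ c = -1) (hyc : y - c ∉ A.1)
    (hyc' : y + c ∉ A.1.erase x) :
    ∃ C A' : SGVert n k, (SG n k).Adj A C ∧ (SG n k).Adj C A' ∧
      (A'.1 ∩ B.1).card < (A.1 ∩ B.1).card := by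
  have hxA := (mem_inter.1 hx).1
  have hy : y + 1 ∉ A.1.erase x ∧ y - 1 ∉ A.1.erase x := by
    rcases hc with rfl | rfl
    · exact ⟨hyc', fun h => hyc (mem_of_mem_erase h)⟩
    · exact ⟨fun h => hyc (by rw [sub_neg_eq_add]; exact mem_of_mem_erase h),
        by rwa [← sub_eq_add_neg] at hyc'⟩
  obtain ⟨A', hA'⟩ := exists_val_eq_insert_erase A hxA hyA hy.1 hy.2
  have hAC : Disjoint A.1 (A.shift c).1 := A.2.2.disjoint_image_add hc
  refine ⟨A.shift c, A', SG.adj_of_disjoint_s12 ⟨x, hxA⟩ hAC,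
    SG.adj_of_disjoint_s12 ⟨x + c, mem_image_of_mem _ hxA⟩ ?_,
    hA' ▸ card_inter_insert_erase_lt hx hyB⟩
  rw [hA', disjoint_insert_right]
  refine ⟨fun h => hyc ?_, hAC.symm.mono_right (erase_subset x A.1)⟩
  obtain ⟨a, ha, rfl⟩ := mem_image.1 h
  simpa using ha

theorem exists_adj_adj_card_inter_lt (hn : 2 * k < n) (A B : SGVert n k)
    (hAB : (A.1 ∩ B.1).Nonempty) :
    ∃ C A' : SGVert n k, (SG n k).Adj A C ∧ (SG n k).Adj C A' ∧
      (A'.1 ∩ B.1).card < (A.1 ∩ B.1).card := by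
  obtain ⟨hA, hAs⟩ := A.2
  obtain ⟨hB, hBs⟩ := B.2
  by_cases hrun : ∀ x ∈ A.1 ∩ B.1, x - 2 ∈ A.1 ∧ x + 2 ∈ A.1
  · obtain ⟨y, hy_sub, hyA, hy_add, hyB⟩ :=
      exists_free_notMem (hA.trans hB.symm).le (by omega) hBs hAB hrun
    obtain ⟨x, hx⟩ := hAB
    exact exists_adj_adj_of_swap A B hx hyA hyB (.inl rfl) hy_sub
      fun h => hy_add (mem_of_mem_erase h)
  push Not at hrun
  obtain ⟨x, hx, hx_add⟩ := hrun
  obtain ⟨hxA, hxB⟩ := mem_inter.1 hx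
  by_cases hx_sub : x - 2 ∈ A.1
  · refine exists_adj_adj_of_swap A B hx (hAs x hxA) (hBs x hxB) (.inr rfl) ?_ (by simp)
    rw [sub_neg_eq_add, add_assoc, one_add_one_eq_two]
    exact hx_add hx_sub
  · refine exists_adj_adj_of_swap A B hx (hAs.sub_one_notMem hxA) (hBs.sub_one_notMem hxB)
      (.inl rfl) ?_ (by simp)
    rwa [sub_sub, one_add_one_eq_two]

theorem exists_walk_length_le (hn : 2 * k < n) (A B : SGVert n k) :
    ∃ p : (SG n k).Walk A B, p.length ≤ 1 + 2 * (A.1 ∩ B.1).card := by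
  by_cases hAB : A = B
  · subst hAB
    exact ⟨.nil, by simp⟩
  rcases (A.1 ∩ B.1).eq_empty_or_nonempty with h | h
  · exact ⟨.cons ⟨hAB, disjoint_iff_inter_eq_empty.2 h⟩ .nil, Nat.le_add_right 1 _⟩
  obtain ⟨C, A', hAC, hCA', hlt⟩ := exists_adj_adj_card_inter_lt hn A B h
  obtain ⟨p, hp⟩ := exists_walk_length_le hn A' B
  exact ⟨.cons hAC (.cons hCA' p), by simp only [SimpleGraph.Walk.length_cons]; omega⟩
termination_by (A.1 ∩ B.1).card

end SGVert

end Development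

theorem stmt12_general (n k h : ℕ) (h1 : 2 * k + 2 ≤ n)
    (A B : SGVert n k) (hcap : (A.1 ∩ B.1).card = h) :
    (SG n k).dist A B ≤ 1 + 2 * h := by
  obtain ⟨p, hp⟩ := SGVert.exists_walk_length_le (by omega : 2 * k < n) A B
  exact (SimpleGraph.dist_le p).trans (hcap ▸ hp)

theorem stmt12 (n k h : ℕ) (h1 : 2 * k + 2 ≤ n) (h2 : n ≤ 4 * k - 3)
    (A B : SGVert n k) (hcap : (A.1 ∩ B.1).card = h) :
    (SG n k).dist A B ≤ 1 + 2 * h :=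
  stmt12_general n k h h1 A B hcap
end
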